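/- (Theorem 1, reaching of the sliding mode.) Let $A_{22}$ be a real $p \times p$ matrix, $D_2$ a real $p \times h$ matrix, $S_2$ a real $(n-p) \times p$ matrix, and let $\bar{\delta} > 0$, $0 < \bar{r} < 1$, $\phi > 1$, $\eta > 0$, $\rho > 0$, $t_0 \in \mathbb{R}$. Let $\tau : [t_0,\infty) \to [0,\infty)$ be differentiable with $|\dot{\tau}(t)| \le \bar{r}$, let $x : \mathbb{R} \to \mathbb{R}^n$ be continuous, and let $\delta : \mathbb{R} \to \mathbb{R}^h$ satisfy $\|\delta(\theta)\| \le \bar{\delta}\, \|x(\theta)\|$ for all $\theta$. Assume the Razumikhin condition $\|x(t + \theta)\| \le \phi\, \|x(t)\|$ for all $t \ge t_0$ and $\theta \in [-\tau(t), 0]$, and that the switching gain dominates: $\rho \ge \phi\, \bar{\delta}\, (1 + \bar{r})\, \|S_2\|\,\| e^{A_{22}\tau(t)} D_2 \| \, \|x(t)\| + \eta$ for all $t \ge t_0$. Let $s : [t_0, \infty) \to \mathbb{R}^{n-p}$ be continuous and suppose that at every $t$ with $s(t) \ne 0$ it is differentiable with $\dot{s}(t) = S_2 (1 - \dot{\tau}(t))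 e^{A_{22}\tau(t)} D_2\, \delta(t - \tau(t)) - \rho\, \mathrm{sign}(s(t))$. Then there exists $T \in [t_0,\ t_0 + \|s(t_0)\|/\eta]$ with $s(T) = 0$: the sliding mode $s \equiv 0$ is reached in finite time. -/

import Mathlib

open Matrix

/-- The componentwise sign vector: `(sign s)ᵢ = 1, -1, 0` according to
`sᵢ > 0`, `sᵢ < 0`, `sᵢ = 0`. -/
noncomputable def signVec {m : ℕ} (s : EuclideanSpace ℝ (Fin m)) : EuclideanSpace ℝ (Fin m) :=
  WithLp.toLp 2 (fun i => Real.sign (s i))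

/-- The operator norm of a real matrix viewed as a linear map between Euclidean spaces. -/
noncomputable def matOpNorm {a b : ℕ} (M : Matrix (Fin a) (Fin b) ℝ) : ℝ :=
  ‖LinearMap.toContinuousLinearMap (Matrix.toEuclideanLin M)‖

open scoped RealInnerProductSpace

/-!
Along a trajectory with `s ≠ 0` the norm `‖s‖` is differentiable with derivative
`⟪s, ṡ⟫ / ‖s‖`. The switching term contributes `-ρ ⟪s, sign s⟫ ≤ -ρ ‖s‖` (the `ℓ¹` norm dominates
the Euclidean one), while by the Razumikhin condition the delayed perturbation contributes at most
`(1 + r̄) ‖S₂‖ ‖e^{A₂₂ τ} D₂‖ δ̄ φ ‖x(t)‖ ‖s‖`, so the gain condition gives `d‖s‖/dt ≤ -η`.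
Hence `‖s(t)‖ + η t` is nonincreasing as long as `s ≠ 0`, which forces `s` to vanish by
`t₀ + ‖s(t₀)‖ / η`.
-/

section Reaching

variable {E : Type*} [NormedAddCommGroup E] [InnerProductSpace ℝ E]

theorem HasDerivAt.norm_of_ne_zero {f : ℝ → E} {f' : E} {t : ℝ} (hf : HasDerivAt f f' t)
    (h0 : f t ≠ 0) : HasDerivAt (‖f ·‖) (⟪f t, f'⟫ / ‖f t‖) t := by
  have h := hf.norm_sq.sqrt (by positivity)
  simp only [Real.sqrt_sq (norm_nonneg _)] at h
  convert h using 1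
  field_simp

theorem exists_eq_zero_of_inner_deriv_le_neg_mul_norm {s ds : ℝ → E} {t₀ η : ℝ} (hη : 0 < η)
    (hs : ContinuousOn s (Set.Ici t₀))
    (hds : ∀ t, t₀ ≤ t → s t ≠ 0 → HasDerivAt s (ds t) t)
    (hdecay : ∀ t, t₀ ≤ t → s t ≠ 0 → ⟪s t, ds t⟫ ≤ -η * ‖s t‖) :
    ∃ T ∈ Set.Icc t₀ (t₀ + ‖s t₀‖ / η), s T = 0 := by
  set T := t₀ + ‖s t₀‖ / η
  have hT : t₀ ≤ T := le_add_of_nonneg_right (by positivity)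
  by_contra! hne
  have hanti : AntitoneOn (fun t => ‖s t‖ + η * t) (Set.Icc t₀ T) := by
    refine antitoneOn_of_hasDerivWithinAt_nonpos (convex_Icc t₀ T)
      (((hs.mono Set.Icc_subset_Ici_self).norm).add (continuousOn_const.mul continuousOn_id))
      (f' := fun t => ⟪s t, ds t⟫ / ‖s t‖ + η) (fun t ht => ?_) (fun t ht => ?_)
    all_goals
      rw [interior_Icc] at ht
      have hst := hne t (Set.Ioo_subset_Icc_self ht)
    · exact (((hds t ht.1.le hst).norm_of_ne_zero hst).add
        ((hasDerivAt_id t).const_mul η |>.congr_deriv (mul_one η))).hasDerivWithinAt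
    · rw [div_add' _ _ _ (norm_ne_zero_iff.2 hst)]
      exact div_nonpos_of_nonpos_of_nonneg (by linarith [hdecay t ht.1.le hst]) (norm_nonneg _)
  have hle := hanti (Set.left_mem_Icc.2 hT) (Set.right_mem_Icc.2 hT) hT
  have hηT : η * T = η * t₀ + ‖s t₀‖ := by simp only [T]; field_simp
  exact hne T (Set.right_mem_Icc.2 hT) (norm_le_zero_iff.1 (by simp only at hle; linarith))

end Reaching

theorem Real.sign_mul_self_eq_abs (r : ℝ) : Real.sign r * r = |r| := by
  rcases lt_trichotomy r 0 with hr | rfl | hr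
  · rw [Real.sign_of_neg hr, abs_of_neg hr, neg_one_mul]
  · simp
  · rw [Real.sign_of_pos hr, abs_of_pos hr, one_mul]

theorem norm_le_inner_signVec {m : ℕ} (v : EuclideanSpace ℝ (Fin m)) :
    ‖v‖ ≤ ⟪v, signVec v⟫ := by
  have hinner : ⟪v, signVec v⟫ = ∑ i, |v i| := by
    simp only [PiLp.inner_apply, RCLike.inner_apply, conj_trivial, signVec]
    exact Finset.sum_congr rfl fun i _ => Real.sign_mul_self_eq_abs _
  rw [hinner, EuclideanSpace.norm_eq]
  refine Real.sqrt_le_iff.2 ⟨Finset.sum_nonneg fun i _ => abs_nonneg _, ?_⟩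
  simpa only [Real.norm_eq_abs] using
    Finset.sum_sq_le_sq_sum_of_nonneg (s := Finset.univ) fun i _ => abs_nonneg (v i)

theorem inner_smul_sub_smul_signVec_le {m : ℕ} (v ζ : EuclideanSpace ℝ (Fin m)) {c ρ η : ℝ}
    (hρ : 0 ≤ ρ) (hζ : |c| * ‖ζ‖ ≤ ρ - η) :
    ⟪v, c • ζ - ρ • signVec v⟫ ≤ -η * ‖v‖ := by
  have hpert : c * ⟪v, ζ⟫ ≤ (ρ - η) * ‖v‖ :=
    calc c * ⟪v, ζ⟫ ≤ |c| * (‖v‖ * ‖ζ‖) :=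
          (le_abs_self _).trans (by rw [abs_mul]; gcongr; exact abs_real_inner_le_norm v ζ)
      _ ≤ (ρ - η) * ‖v‖ := by rw [mul_left_comm, mul_comm _ ‖v‖]; gcongr
  have hswitch := mul_le_mul_of_nonneg_left (norm_le_inner_signVec v) hρ
  rw [inner_sub_right, real_inner_smul_right, real_inner_smul_right]
  linarith

theorem norm_toEuclideanLin_apply_le {a b : ℕ} (M : Matrix (Fin a) (Fin b) ℝ)
    (v : EuclideanSpace ℝ (Fin b)) : ‖Matrix.toEuclideanLin M v‖ ≤ matOpNorm M * ‖v‖ :=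
  (LinearMap.toContinuousLinearMap (Matrix.toEuclideanLin M)).le_opNorm v

theorem norm_toEuclideanLin_comp_apply_le {a b c : ℕ} (M : Matrix (Fin a) (Fin b) ℝ)
    (N : Matrix (Fin b) (Fin c) ℝ) (v : EuclideanSpace ℝ (Fin c)) :
    ‖Matrix.toEuclideanLin M (Matrix.toEuclideanLin N v)‖ ≤ matOpNorm M * (matOpNorm N * ‖v‖) :=
  (norm_toEuclideanLin_apply_le M _).trans <|
    mul_le_mul_of_nonneg_left (norm_toEuclideanLin_apply_le N v) (norm_nonneg _)

theorem sliding_mode_reached_in_finite_time_general {n p h : ℕ}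
    (A22 : Matrix (Fin p) (Fin p) ℝ) (D2 : Matrix (Fin p) (Fin h) ℝ)
    (S2 : Matrix (Fin (n - p)) (Fin p) ℝ)
    (δbar rbar φ η ρ t₀ : ℝ)
    (hδbar : 0 < δbar) (hη : 0 < η) (hρ : 0 < ρ)
    (τ τ' : ℝ → ℝ)
    (hτ0 : ∀ t, t₀ ≤ t → 0 ≤ τ t)
    (hτ' : ∀ t, t₀ ≤ t → |τ' t| ≤ rbar)
    (x : ℝ → EuclideanSpace ℝ (Fin n))
    (δ : ℝ → EuclideanSpace ℝ (Fin h))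
    (hδ : ∀ θ : ℝ, ‖δ θ‖ ≤ δbar * ‖x θ‖)
    (hRaz : ∀ t, t₀ ≤ t → ∀ θ ∈ Set.Icc (-τ t) (0 : ℝ), ‖x (t + θ)‖ ≤ φ * ‖x t‖)
    (hgain : ∀ t, t₀ ≤ t →
      φ * δbar * (1 + rbar) * matOpNorm S2
          * matOpNorm (NormedSpace.exp (τ t • A22) * D2) * ‖x t‖ + η ≤ ρ)
    (s : ℝ → EuclideanSpace ℝ (Fin (n - p)))
    (hscont : ContinuousOn s (Set.Ici t₀))
    (hdyn : ∀ t, t₀ ≤ t → s t ≠ 0 → HasDerivAt s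
      ((1 - τ' t) • (WithLp.equiv 2 (Fin (n - p) → ℝ)).symm
          (S2 *ᵥ (NormedSpace.exp (τ t • A22) *ᵥ (D2 *ᵥ δ (t - τ t))))
        - ρ • signVec (s t)) t) :
    ∃ T ∈ Set.Icc t₀ (t₀ + ‖s t₀‖ / η), s T = 0 := by
  refine exists_eq_zero_of_inner_deriv_le_neg_mul_norm hη hscont hdyn fun t ht _ => ?_
  set E := NormedSpace.exp (τ t • A22)
  set ζ := Matrix.toEuclideanLin S2 (Matrix.toEuclideanLin (E * D2) (δ (t - τ t)))
  have hζ : (WithLp.equiv 2 (Fin (n - p) → ℝ)).symm (S2 *ᵥ (E *ᵥ (D2 *ᵥ δ (t - τ t)))) = ζ := by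
    rw [Matrix.mulVec_mulVec _ E]
    rfl
  have hxdelay : ‖x (t - τ t)‖ ≤ φ * ‖x t‖ := by
    simpa [sub_eq_add_neg] using hRaz t ht (-τ t) ⟨le_rfl, neg_nonpos.2 (hτ0 t ht)⟩
  have hζle : ‖ζ‖ ≤ matOpNorm S2 * (matOpNorm (E * D2) * (δbar * (φ * ‖x t‖))) := by
    refine (norm_toEuclideanLin_comp_apply_le _ _ _).trans ?_
    gcongr
    exacts [norm_nonneg _, norm_nonneg _, (hδ _).trans (by gcongr)]
  have hrate : |1 - τ' t| ≤ 1 + rbar := by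
    linarith [abs_sub (1 : ℝ) (τ' t), abs_one (α := ℝ), hτ' t ht]
  rw [hζ]
  refine inner_smul_sub_smul_signVec_le _ ζ hρ.le ?_
  calc |1 - τ' t| * ‖ζ‖
      ≤ (1 + rbar) * (matOpNorm S2 * (matOpNorm (E * D2) * (δbar * (φ * ‖x t‖)))) :=
        mul_le_mul hrate hζle (norm_nonneg _) ((abs_nonneg _).trans hrate)
    _ ≤ ρ - η := by linarith [hgain t ht]

/-- **Theorem 1 (reaching of the sliding mode).**
Under the bounds on the delay rate, the parametric uncertainty, the Razumikhin condition,
and the switching-gain domination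
`ρ ≥ φ δ̄ (1+r̄) ‖S₂‖ ‖e^{A₂₂ τ(t)} D₂‖ ‖x(t)‖ + η`, the closed-loop sliding dynamics
`ṡ = (1-τ̇) S₂ e^{A₂₂ τ} D₂ δ(t-τ) - ρ sign(s)` reach the sliding mode `s ≡ 0` in finite
time, no later than `t₀ + ‖s(t₀)‖/η`. -/
theorem sliding_mode_reached_in_finite_time {n p h : ℕ}
    (A22 : Matrix (Fin p) (Fin p) ℝ) (D2 : Matrix (Fin p) (Fin h) ℝ)
    (S2 : Matrix (Fin (n - p)) (Fin p) ℝ)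
    (δbar rbar φ η ρ t₀ : ℝ)
    (hδbar : 0 < δbar) (hrbar0 : 0 < rbar) (hrbar1 : rbar < 1)
    (hφ : 1 < φ) (hη : 0 < η) (hρ : 0 < ρ)
    (τ τ' : ℝ → ℝ)
    (hτ0 : ∀ t, t₀ ≤ t → 0 ≤ τ t)
    (hτd : ∀ t, t₀ ≤ t → HasDerivAt τ (τ' t) t)
    (hτ' : ∀ t, t₀ ≤ t → |τ' t| ≤ rbar)
    (x : ℝ → EuclideanSpace ℝ (Fin n)) (hx : Continuous x)
    (δ : ℝ → EuclideanSpace ℝ (Fin h))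
    (hδ : ∀ θ : ℝ, ‖δ θ‖ ≤ δbar * ‖x θ‖)
    (hRaz : ∀ t, t₀ ≤ t → ∀ θ ∈ Set.Icc (-τ t) (0 : ℝ), ‖x (t + θ)‖ ≤ φ * ‖x t‖)
    (hgain : ∀ t, t₀ ≤ t →
      φ * δbar * (1 + rbar) * matOpNorm S2
          * matOpNorm (NormedSpace.exp (τ t • A22) * D2) * ‖x t‖ + η ≤ ρ)
    (s : ℝ → EuclideanSpace ℝ (Fin (n - p)))
    (hscont : ContinuousOn s (Set.Ici t₀))
    (hdyn : ∀ t, t₀ ≤ t → s t ≠ 0 → HasDerivAt s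
      ((1 - τ' t) • (WithLp.equiv 2 (Fin (n - p) → ℝ)).symm
          (S2 *ᵥ (NormedSpace.exp (τ t • A22) *ᵥ (D2 *ᵥ δ (t - τ t))))
        - ρ • signVec (s t)) t) :
    ∃ T ∈ Set.Icc t₀ (t₀ + ‖s t₀‖ / η), s T = 0 :=
  sliding_mode_reached_in_finite_time_general A22 D2 S2 δbar rbar φ η ρ t₀ hδbar hη hρ τ τ' hτ0 hτ'
    x δ hδ hRaz hgain s hscont hdyn
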